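/- arXiv:0809.1545 — 3 statements merged into one kernel-verified Lean document; each statement's English description precedes it below -/
import Mathlib

section
/- Let F be a distribution function on ℝ with sup_{x∈ℝ, x≠0}|x|^α(1_{x>0}(1−F(x)) + 1_{x<0}F(x)) = K < ∞, where 0 < α < 2. Then for every β > 0 and every ε > 0, ∫_{(−ε,ε]} x² dF(x/β) ≤ 2K(1 + 2/(2−α)) β^α ε^{2−α}. -/
/-!
With `Y = β X`, the layer-cake formula gives
`E[Y² ; |Y| ≤ ε] ≤ ∫₀^ε 2t P(|Y| > t) dt`. The two one-sided tail bounds give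
`P(|Y| > t) ≤ 2 K β^α t^(-α)`, so the right side is at most
`4 K β^α ∫₀^ε t^(1-α) dt = 4 K β^α ε^(2-α) / (2 - α)`, and this is integrable at `0` exactly
because `α < 2`.
-/

open MeasureTheory Set

lemma setLIntegral_sq_le_lintegral_meas_lt_mul {Ω : Type*} [MeasurableSpace Ω] (μ : Measure Ω)
    {Y : Ω → ℝ} (hY : Measurable Y) (ε : ℝ) :
    ∫⁻ ω in {ω | |Y ω| ≤ ε}, ENNReal.ofReal (Y ω ^ 2) ∂μ
      ≤ ∫⁻ t in Ioc 0 ε, μ {ω | t < |Y ω|} * ENNReal.ofReal (2 * t) := by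
  set S := {ω | |Y ω| ≤ ε}
  have hS : MeasurableSet S := measurableSet_le hY.abs measurable_const
  set f := S.indicator fun ω => |Y ω|
  have hf_nonneg : 0 ≤ f := indicator_nonneg fun ω _ => abs_nonneg (Y ω)
  have hsub : ∀ t, 0 < t → {ω | t < f ω} ⊆ {ω | t < |Y ω| ∧ |Y ω| ≤ ε} := fun t ht ω hω => by
    by_cases h : ω ∈ S
    · exact ⟨hω.trans_eq (indicator_of_mem h _), h⟩
    · have : f ω = 0 := indicator_of_notMem h _
      linarith [hω.trans_eq this]
  have hsq : ∀ a : ℝ, ∫ t in (0 : ℝ)..a, 2 * t = a ^ 2 := fun a => by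
    rw [intervalIntegral.integral_const_mul, integral_id]; ring
  have hlayer := lintegral_comp_eq_lintegral_meas_lt_mul (g := fun t => 2 * t) μ
    (ae_of_all _ hf_nonneg) (hY.abs.indicator hS).aemeasurable
    (fun t _ => (continuous_const.mul continuous_id).intervalIntegrable 0 t)
    ((ae_restrict_iff' measurableSet_Ioi).2 (ae_of_all _ fun t (ht : 0 < t) => by linarith))
  simp only [hsq] at hlayer
  calc ∫⁻ ω in S, ENNReal.ofReal (Y ω ^ 2) ∂μ = ∫⁻ ω, ENNReal.ofReal (f ω ^ 2) ∂μ := by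
        rw [← lintegral_indicator hS]
        congr 1; ext ω
        by_cases h : ω ∈ S <;> simp [f, h]
    _ = ∫⁻ t in Ioi 0, μ {ω | t < f ω} * ENNReal.ofReal (2 * t) := hlayer
    _ ≤ ∫⁻ t in Ioi 0,
          (Ioc 0 ε).indicator (fun t => μ {ω | t < |Y ω|} * ENNReal.ofReal (2 * t)) t := by
        refine setLIntegral_mono' measurableSet_Ioi fun t (ht : 0 < t) => ?_
        by_cases htε : t ≤ ε
        · rw [indicator_of_mem (show t ∈ Ioc 0 ε from ⟨ht, htε⟩)]
          gcongr μ ?_ * _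
          exact (hsub t ht).trans fun ω hω => hω.1
        · have hempty : {ω | t < f ω} = ∅ :=
            subset_empty_iff.1 <| (hsub t ht).trans fun ω hω => by linarith [hω.1, hω.2]
          simp [hempty]
    _ = _ := by
        rw [setLIntegral_indicator measurableSet_Ioc,
          inter_eq_self_of_subset_left Ioc_subset_Ioi_self]

lemma lintegral_Ioc_rpow {r ε : ℝ} (hr : -1 < r) (hε : 0 ≤ ε) :
    ∫⁻ t in Ioc 0 ε, ENNReal.ofReal (t ^ r) = ENNReal.ofReal (ε ^ (r + 1) / (r + 1)) := by
  have hint : IntegrableOn (fun t : ℝ => t ^ r) (Ioc 0 ε) :=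
    (intervalIntegral.intervalIntegrable_rpow' hr).1
  rw [← ofReal_integral_eq_lintegral_ofReal hint
    ((ae_restrict_iff' measurableSet_Ioc).2 (ae_of_all _ fun t ht => Real.rpow_nonneg ht.1.le r)),
    ← intervalIntegral.integral_of_le hε, integral_rpow (Or.inl hr),
    Real.zero_rpow (by linarith), sub_zero]

lemma setLIntegral_sq_le_of_meas_lt_abs_le {Ω : Type*} [MeasurableSpace Ω]
    (μ : Measure Ω) {Y : Ω → ℝ} (hY : Measurable Y) {α C ε : ℝ} (hα : α < 2) (hε : 0 ≤ ε)
    (htail : ∀ t ∈ Ioc 0 ε, μ {ω | t < |Y ω|} ≤ ENNReal.ofReal (C * t ^ (-α))) :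
    ∫⁻ ω in {ω | |Y ω| ≤ ε}, ENNReal.ofReal (Y ω ^ 2) ∂μ
      ≤ ENNReal.ofReal (2 * C * (ε ^ (2 - α) / (2 - α))) := by
  calc ∫⁻ ω in {ω | |Y ω| ≤ ε}, ENNReal.ofReal (Y ω ^ 2) ∂μ
      ≤ ∫⁻ t in Ioc 0 ε, μ {ω | t < |Y ω|} * ENNReal.ofReal (2 * t) :=
        setLIntegral_sq_le_lintegral_meas_lt_mul μ hY ε
    _ ≤ ∫⁻ t in Ioc 0 ε, ENNReal.ofReal (2 * C) * ENNReal.ofReal (t ^ (1 - α)) := by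
        refine setLIntegral_mono' measurableSet_Ioc fun t ht => ?_
        have hpow : C * t ^ (-α) * (2 * t) = 2 * C * t ^ (1 - α) := by
          rw [sub_eq_neg_add, Real.rpow_add_one ht.1.ne']; ring
        calc μ {ω | t < |Y ω|} * ENNReal.ofReal (2 * t)
            ≤ ENNReal.ofReal (C * t ^ (-α)) * ENNReal.ofReal (2 * t) := by gcongr; exact htail t ht
          _ = _ := by
            rw [← ENNReal.ofReal_mul' (by linarith [ht.1]), hpow,
              ENNReal.ofReal_mul' (Real.rpow_nonneg ht.1.le _)]
    _ = ENNReal.ofReal (2 * C * (ε ^ (2 - α) / (2 - α))) := by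
        rw [lintegral_const_mul _ (by fun_prop), lintegral_Ioc_rpow (by linarith) hε,
          show 1 - α + 1 = 2 - α by ring,
          ← ENNReal.ofReal_mul' (div_nonneg (Real.rpow_nonneg hε _) (by linarith))]

section PowerTail

variable {Ω : Type*} [MeasurableSpace Ω] {μ : Measure Ω} [IsFiniteMeasure μ] {X : Ω → ℝ}
  {α K : ℝ}

lemma meas_lt_abs_le_of_tail_le
    (hplus : ∀ x : ℝ, 0 < x → (μ {ω | x < X ω}).toReal ≤ K * x ^ (-α))
    (hminus : ∀ x : ℝ, x < 0 → (μ {ω | X ω ≤ x}).toReal ≤ K * |x| ^ (-α))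
    {t : ℝ} (ht : 0 < t) : μ {ω | t < |X ω|} ≤ ENNReal.ofReal (2 * K * t ^ (-α)) := by
  have hle_ofReal {s : Set Ω} {b : ℝ} (h : (μ s).toReal ≤ b) : μ s ≤ ENNReal.ofReal b :=
    (ENNReal.ofReal_toReal (measure_ne_top μ s)).symm.trans_le (ENNReal.ofReal_le_ofReal h)
  have hright : μ {ω | t < X ω} ≤ ENNReal.ofReal (K * t ^ (-α)) := hle_ofReal (hplus t ht)
  have hleft : μ {ω | X ω ≤ -t} ≤ ENNReal.ofReal (K * t ^ (-α)) := by
    simpa [abs_of_pos ht] using hle_ofReal (hminus (-t) (neg_lt_zero.2 ht))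
  have hsplit : {ω | t < |X ω|} ⊆ {ω | t < X ω} ∪ {ω | X ω ≤ -t} :=
    fun ω (hω : t < |X ω|) => by
    rcases lt_abs.1 hω with hpos | hneg
    · exact Or.inl hpos
    · exact Or.inr (show X ω ≤ -t by linarith)
  calc μ {ω | t < |X ω|} ≤ μ {ω | t < X ω} + μ {ω | X ω ≤ -t} :=
        (measure_mono hsplit).trans (measure_union_le _ _)
    _ ≤ 2 * ENNReal.ofReal (K * t ^ (-α)) := by rw [two_mul]; gcongr
    _ = ENNReal.ofReal (2 * K * t ^ (-α)) := by
        rw [mul_assoc, ENNReal.ofReal_mul zero_le_two, ENNReal.ofReal_ofNat]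

lemma meas_lt_abs_const_mul_le_of_tail_le
    (hplus : ∀ x : ℝ, 0 < x → (μ {ω | x < X ω}).toReal ≤ K * x ^ (-α))
    (hminus : ∀ x : ℝ, x < 0 → (μ {ω | X ω ≤ x}).toReal ≤ K * |x| ^ (-α))
    {β t : ℝ} (hβ : 0 < β) (ht : 0 < t) :
    μ {ω | t < |β * X ω|} ≤ ENNReal.ofReal (2 * K * β ^ α * t ^ (-α)) := by
  have hset : {ω | t < |β * X ω|} = {ω | t / β < |X ω|} := by
    ext ω
    simp only [mem_ofPred_eq, abs_mul, abs_of_pos hβ, div_lt_iff₀ hβ, mul_comm β]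
  have hscale : (t / β) ^ (-α) = β ^ α * t ^ (-α) := by
    rw [Real.div_rpow ht.le hβ.le, Real.rpow_neg hβ.le, div_inv_eq_mul, mul_comm]
  rw [hset, mul_assoc, ← hscale]
  exact meas_lt_abs_le_of_tail_le hplus hminus (div_pos ht hβ)

end PowerTail

theorem truncated_second_moment_bound_general {Ω : Type*} [MeasurableSpace Ω]
    (μ : Measure Ω) [IsProbabilityMeasure μ]
    (X : Ω → ℝ) (hX : Measurable X)
    (α : ℝ) (hα2 : α < 2) (K : ℝ)
    (hplus : ∀ x : ℝ, 0 < x → (μ {ω | x < X ω}).toReal ≤ K * x ^ (-α))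
    (hminus : ∀ x : ℝ, x < 0 → (μ {ω | X ω ≤ x}).toReal ≤ K * |x| ^ (-α))
    (β ε : ℝ) (hβ : 0 < β) (hε : 0 < ε) :
    ∫⁻ ω in {ω | |β * X ω| ≤ ε}, ENNReal.ofReal ((β * X ω) ^ 2) ∂μ
      ≤ ENNReal.ofReal (2 * K * (1 + 2 / (2 - α)) * β ^ α * ε ^ (2 - α)) := by
  have hK : 0 ≤ K := by simpa using ENNReal.toReal_nonneg.trans (hplus 1 one_pos)
  refine (setLIntegral_sq_le_of_meas_lt_abs_le μ (hX.const_mul β) hα2 hε.le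
    fun t ht => meas_lt_abs_const_mul_le_of_tail_le hplus hminus hβ ht.1).trans ?_
  refine ENNReal.ofReal_le_ofReal ?_
  have hscale : 0 ≤ K * β ^ α * ε ^ (2 - α) := by positivity
  calc 2 * (2 * K * β ^ α) * (ε ^ (2 - α) / (2 - α))
      = 2 * (2 / (2 - α)) * (K * β ^ α * ε ^ (2 - α)) := by ring
    _ ≤ 2 * (1 + 2 / (2 - α)) * (K * β ^ α * ε ^ (2 - α)) := by gcongr; linarith
    _ = 2 * K * (1 + 2 / (2 - α)) * β ^ α * ε ^ (2 - α) := by ring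

theorem truncated_second_moment_bound {Ω : Type*} [MeasurableSpace Ω]
    (μ : Measure Ω) [IsProbabilityMeasure μ]
    (X : Ω → ℝ) (hX : Measurable X)
    (α : ℝ) (hα0 : 0 < α) (hα2 : α < 2) (K : ℝ)
    (hplus : ∀ x : ℝ, 0 < x → (μ {ω | x < X ω}).toReal ≤ K * x ^ (-α))
    (hminus : ∀ x : ℝ, x < 0 → (μ {ω | X ω ≤ x}).toReal ≤ K * |x| ^ (-α))
    (β ε : ℝ) (hβ : 0 < β) (hε : 0 < ε) :
    ∫⁻ ω in {ω | |β * X ω| ≤ ε}, ENNReal.ofReal ((β * X ω) ^ 2) ∂μ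
      ≤ ENNReal.ofReal (2 * K * (1 + 2 / (2 - α)) * β ^ α * ε ^ (2 - α)) :=
  truncated_second_moment_bound_general μ X hX α hα2 K hplus hminus β ε hβ hε
end

section
/- With the recursive random weights β_{j,n} as above and s > 0 with E[L^s+R^s] < ∞, one has E[M_{n+1}^{(s)} | 𝒢_n] = M_n^{(s)} (1 + S(s)/n) almost surely, where M_n^{(s)} = Σ_{j=1}^n β_{j,n}^s, S(s) = E[L^s+R^s] − 1, and 𝒢_n is the σ-algebra generated by (I_1,…,I_{n−1}, L_1,R_1,…,L_{n−1},R_{n−1}). In particular, if E[L^s+R^s] = 1 then (M_n^{(s)})_n is a martingale with respect to (𝒢_n)_n. -/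
open MeasureTheory ProbabilityTheory

/-- The recursive random weights `β_{j,n}` of McKean trees: `kacWeight L R I n j ω`
is the weight `β_{j,n}(ω)` (for `1 ≤ j ≤ n`), built by splitting the `I_n`-th weight
into `(L_n β_{I_n,n}, R_n β_{I_n,n})`. -/
noncomputable def kacWeight {Ω : Type*} (L R : ℕ → Ω → ℝ) (I : ℕ → Ω → ℕ) :
    ℕ → ℕ → Ω → ℝ
  | 0, _, _ => 0
  | 1, j, _ => if j = 1 then 1 else 0
  | (n + 2), j, ω =>
      if j < I (n + 1) ω then kacWeight L R I (n + 1) j ω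
      else if j = I (n + 1) ω then L (n + 1) ω * kacWeight L R I (n + 1) j ω
      else if j = I (n + 1) ω + 1 then R (n + 1) ω * kacWeight L R I (n + 1) (j - 1) ω
      else kacWeight L R I (n + 1) (j - 1) ω

/-- `M_n^{(s)} = Σ_{j=1}^n β_{j,n}^s`. -/
noncomputable def kacM {Ω : Type*} (L R : ℕ → Ω → ℝ) (I : ℕ → Ω → ℕ)
    (s : ℝ) (n : ℕ) (ω : Ω) : ℝ :=
  ∑ j ∈ Finset.Icc 1 n, kacWeight L R I n j ω ^ s

/-- Joint family encoding the coefficient pairs `(L_n, R_n)` and the indices `I_n`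
as one indexed family of random vectors, used to state their mutual independence. -/
noncomputable def kacFamily {Ω : Type*} (L R : ℕ → Ω → ℝ) (I : ℕ → Ω → ℕ) :
    ℕ ⊕ ℕ → Ω → ℝ × ℝ :=
  Sum.elim (fun n ω => (L n ω, R n ω)) (fun n ω => ((I n ω : ℝ), 0))

/-- The σ-algebra `𝒢_n` generated by `I_1, …, I_{n-1}, L_1, R_1, …, L_{n-1}, R_{n-1}`. -/
def kacSigma {Ω : Type*} (L R : ℕ → Ω → ℝ) (I : ℕ → Ω → ℕ) (n : ℕ) :
    MeasurableSpace Ω :=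
  ⨆ k ∈ Finset.Icc 1 (n - 1),
    (MeasurableSpace.comap (L k) inferInstance ⊔ MeasurableSpace.comap (R k) inferInstance
      ⊔ MeasurableSpace.comap (I k) inferInstance)

/-!
When `1 ≤ I_n ≤ n` (almost surely), step `n` replaces the summand `β_{I_n,n}^s` of `M_n^{(s)}`
by `(L_n β_{I_n,n})^s + (R_n β_{I_n,n})^s`, so
`M_{n+1}^{(s)} = M_n^{(s)} + ∑_k β_{k,n}^s (L_n^s + R_n^s - 1) 𝟙{I_n = k}`.
The weights `β_{k,n}` are `𝒢_n`-measurable, while `(L_n, R_n, I_n)` is independent of `𝒢_n`, and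
`(L_n, R_n)` of `I_n`; hence each summand has conditional expectation `β_{k,n}^s S(s) / n`.
Integrability of `M_n^{(s)}` follows along the way by induction on `n`.
-/

open Finset

theorem Finset.sum_Icc_split_at {M : Type*} [AddCommGroup M] (f : ℕ → M) (a b : M) {k : ℕ}
    (hk : 1 ≤ k) {n : ℕ} (hkn : k ≤ n) :
    ∑ j ∈ Icc 1 (n + 1),
        (if j < k then f j else if j = k then a else if j = k + 1 then b else f (j - 1)) =
      ∑ j ∈ Icc 1 n, f j + (a + b - f k) := by
  induction n, hkn using Nat.le_induction with
  | base =>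
    obtain ⟨i, rfl⟩ : ∃ i, k = i + 1 := ⟨k - 1, by omega⟩
    have hlow : ∀ j ∈ Icc 1 i,
        (if j < i + 1 then f j else if j = i + 1 then a else if j = i + 1 + 1 then b
          else f (j - 1)) = f j :=
      fun j hj => if_pos (by rw [mem_Icc] at hj; omega)
    rw [sum_Icc_succ_top (by omega), sum_Icc_succ_top (by omega), sum_congr rfl hlow,
      sum_Icc_succ_top (by omega)]
    rw [if_neg (lt_irrefl _), if_pos rfl, if_neg (by omega), if_neg (by omega), if_pos rfl]
    abel
  | succ n hkn ih =>
    rw [sum_Icc_succ_top (by omega), ih, sum_Icc_succ_top (by omega),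
      if_neg (by omega), if_neg (by omega), if_neg (by omega), Nat.add_sub_cancel]
    abel

section Weights

variable {Ω : Type*} {L R : ℕ → Ω → ℝ} {I : ℕ → Ω → ℕ}

theorem kacWeight_nonneg (hL : ∀ n ω, 0 ≤ L n ω) (hR : ∀ n ω, 0 ≤ R n ω) :
    ∀ n j ω, 0 ≤ kacWeight L R I n j ω
  | 0, _, _ => le_rfl
  | 1, j, _ => by simp only [kacWeight]; split_ifs <;> norm_num
  | n + 2, j, ω => by
    have ih := kacWeight_nonneg hL hR (n + 1)
    simp only [kacWeight]
    split_ifs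
    exacts [ih j ω, mul_nonneg (hL _ _) (ih j ω), mul_nonneg (hR _ _) (ih _ ω), ih _ ω]

theorem kacM_add_one (hL : ∀ n ω, 0 ≤ L n ω) (hR : ∀ n ω, 0 ≤ R n ω) (s : ℝ) {n : ℕ}
    (hn : 1 ≤ n) {ω : Ω} (hI : I n ω ∈ Icc 1 n) :
    kacM L R I s (n + 1) ω =
      kacM L R I s n ω + (L n ω ^ s + R n ω ^ s - 1) * kacWeight L R I n (I n ω) ω ^ s := by
  obtain ⟨m, rfl⟩ : ∃ m, n = m + 1 := ⟨n - 1, by omega⟩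
  set k := I (m + 1) ω
  set w := fun j => kacWeight L R I (m + 1) j ω
  have hsplit : ∀ j, kacWeight L R I (m + 1 + 1) j ω ^ s =
      if j < k then w j ^ s else if j = k then (L (m + 1) ω * w k) ^ s
      else if j = k + 1 then (R (m + 1) ω * w k) ^ s else w (j - 1) ^ s := by
    intro j
    simp only [kacWeight]
    split_ifs <;> simp_all [w, k]
  rw [mem_Icc] at hI
  rw [kacM, sum_congr rfl fun j _ => hsplit j, sum_Icc_split_at _ _ _ hI.1 hI.2, kacM,
    Real.mul_rpow (hL _ _) (kacWeight_nonneg hL hR _ _ _),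
    Real.mul_rpow (hR _ _) (kacWeight_nonneg hL hR _ _ _)]
  ring

end Weights

section Measurability

variable {Ω : Type*} {L R : ℕ → Ω → ℝ} {I : ℕ → Ω → ℕ}

theorem kacSigma_le {m₀ : MeasurableSpace Ω} (hL : ∀ n, Measurable (L n))
    (hR : ∀ n, Measurable (R n)) (hI : ∀ n, Measurable (I n)) (n : ℕ) :
    kacSigma L R I n ≤ m₀ :=
  iSup₂_le fun k _ => sup_le (sup_le (hL k).comap_le (hR k).comap_le) (hI k).comap_le

theorem kacSigma_mono : Monotone (kacSigma L R I) :=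
  fun _ _ hmn => biSup_mono fun k hk => by simp only [mem_Icc] at hk ⊢; omega

theorem comap_le_kacSigma {n k : ℕ} (hk : k ∈ Icc 1 (n - 1)) :
    MeasurableSpace.comap (L k) inferInstance ⊔ MeasurableSpace.comap (R k) inferInstance
      ⊔ MeasurableSpace.comap (I k) inferInstance ≤ kacSigma L R I n :=
  le_biSup (fun k => MeasurableSpace.comap (L k) inferInstance
    ⊔ MeasurableSpace.comap (R k) inferInstance ⊔ MeasurableSpace.comap (I k) inferInstance) hk

theorem measurable_kacWeight : ∀ n j, Measurable[kacSigma L R I n] (kacWeight L R I n j)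
  | 0, _ => measurable_const
  | 1, _ => measurable_const
  | n + 2, j => by
    have hk : n + 1 ∈ Icc 1 (n + 2 - 1) := by simp
    have hle := comap_le_kacSigma (L := L) (R := R) (I := I) hk
    have hLk := Measurable.of_comap_le ((le_sup_left.trans le_sup_left).trans hle)
    have hRk := Measurable.of_comap_le ((le_sup_right.trans le_sup_left).trans hle)
    have hIk := Measurable.of_comap_le (le_sup_right.trans hle)
    have ih : ∀ j, Measurable[kacSigma L R I (n + 2)] (kacWeight L R I (n + 1) j) :=
      fun j => (measurable_kacWeight (n + 1) j).mono (kacSigma_mono (by omega)) le_rfl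
    simp only [kacWeight]
    refine .ite (hIk (MeasurableSet.of_discrete (s := {x | j < x}))) (ih j) ?_
    refine .ite (hIk (MeasurableSet.of_discrete (s := {x | j = x}))) (hLk.mul (ih j)) ?_
    exact .ite (hIk (MeasurableSet.of_discrete (s := {x | j = x + 1})))
      (hRk.mul (ih (j - 1))) (ih (j - 1))

theorem measurable_kacM (s : ℝ) (n : ℕ) : Measurable[kacSigma L R I n] (kacM L R I s n) :=
  Finset.measurable_sum _ fun j _ => (measurable_kacWeight n j).pow_const s

end Measurability

section Independence

variable {Ω : Type*} {L R : ℕ → Ω → ℝ} {I : ℕ → Ω → ℕ}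

theorem ProbabilityTheory.Indep.indepFun_of_measurable {β γ : Type*} [MeasurableSpace β]
    [MeasurableSpace γ] {m₀ m₁ m₂ : MeasurableSpace Ω} {μ : Measure[m₀] Ω} {f : Ω → β}
    {g : Ω → γ} (h : Indep m₁ m₂ μ) (hf : Measurable[m₁] f) (hg : Measurable[m₂] g) :
    IndepFun f g μ :=
  indep_of_indep_of_le_left (indep_of_indep_of_le_right h hg.comap_le) hf.comap_le

theorem measurable_kacFamily [MeasurableSpace Ω] (hL : ∀ n, Measurable (L n))
    (hR : ∀ n, Measurable (R n)) (hI : ∀ n, Measurable (I n)) :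
    ∀ i, Measurable (kacFamily L R I i)
  | .inl k => (hL k).prodMk (hR k)
  | .inr k => (measurable_from_nat.comp (hI k)).prodMk measurable_const

theorem measurable_L_comap_kacFamily (k : ℕ) :
    Measurable[MeasurableSpace.comap (kacFamily L R I (.inl k)) inferInstance] (L k) :=
  measurable_fst.comp (comap_measurable _)

theorem measurable_R_comap_kacFamily (k : ℕ) :
    Measurable[MeasurableSpace.comap (kacFamily L R I (.inl k)) inferInstance] (R k) :=
  measurable_snd.comp (comap_measurable _)

theorem measurable_I_comap_kacFamily (k : ℕ) :
    Measurable[MeasurableSpace.comap (kacFamily L R I (.inr k)) inferInstance] (I k) := by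
  have hI : I k = fun ω => ⌊(kacFamily L R I (.inr k) ω).1⌋₊ :=
    funext fun ω => (Nat.floor_natCast (R := ℝ) _).symm
  rw [hI]
  exact Nat.measurable_floor.comp (measurable_fst.comp (comap_measurable _))

theorem kacSigma_le_iSup_comap_kacFamily (n : ℕ) :
    kacSigma L R I n ≤ ⨆ i ∈ {i | Sum.elim id id i < n},
      MeasurableSpace.comap (kacFamily L R I i) inferInstance := by
  refine iSup₂_le fun k hk => ?_
  have hkn : k < n := by simp only [mem_Icc] at hk; omega
  have hle : ∀ i, Sum.elim id id i < n → MeasurableSpace.comap (kacFamily L R I i) inferInstance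
      ≤ ⨆ i ∈ {i | Sum.elim id id i < n},
        MeasurableSpace.comap (kacFamily L R I i) inferInstance :=
    fun i hi => le_biSup (fun i => MeasurableSpace.comap (kacFamily L R I i) inferInstance) hi
  exact sup_le (sup_le ((measurable_L_comap_kacFamily k).comap_le.trans (hle (.inl k) hkn))
    ((measurable_R_comap_kacFamily k).comap_le.trans (hle (.inl k) hkn)))
    ((measurable_I_comap_kacFamily k).comap_le.trans (hle (.inr k) hkn))

theorem indep_kacFamily_kacSigma [MeasurableSpace Ω] {μ : Measure Ω}
    (hL : ∀ n, Measurable (L n)) (hR : ∀ n, Measurable (R n)) (hI : ∀ n, Measurable (I n))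
    (hindep : iIndepFun (kacFamily L R I) μ) (n : ℕ) :
    Indep (MeasurableSpace.comap (kacFamily L R I (.inl n)) inferInstance
        ⊔ MeasurableSpace.comap (kacFamily L R I (.inr n)) inferInstance)
      (kacSigma L R I n) μ := by
  have h := indep_iSup_of_disjoint (fun i => (measurable_kacFamily hL hR hI i).comap_le)
    ((iIndepFun_iff_iIndep _ _ _).mp hindep)
    (S := {.inl n, .inr n}) (T := {i | Sum.elim id id i < n}) (by simp)
  rw [iSup_pair] at h
  exact indep_of_indep_of_le_right h (kacSigma_le_iSup_comap_kacFamily n)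

end Independence

section Probability

variable {Ω : Type*}

theorem ae_mem_Icc_of_measure_eq_inv [MeasurableSpace Ω] {μ : Measure Ω} [IsProbabilityMeasure μ]
    {X : Ω → ℕ} (hX : Measurable X) {n : ℕ} (hn : 1 ≤ n)
    (hunif : ∀ k ∈ Icc 1 n, μ {ω | X ω = k} = (n : ENNReal)⁻¹) :
    ∀ᵐ ω ∂μ, X ω ∈ Icc 1 n := by
  have hfull : μ (X ⁻¹' ↑(Icc 1 n)) = 1 := by
    rw [← sum_measure_preimage_singleton _ fun k _ => hX (measurableSet_singleton k),
      sum_congr (f := fun k => μ (X ⁻¹' {k})) rfl hunif, sum_const, Nat.card_Icc,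
      Nat.add_sub_cancel, nsmul_eq_mul]
    exact ENNReal.mul_inv_cancel (by exact_mod_cast (by omega : n ≠ 0)) (ENNReal.natCast_ne_top n)
  exact ae_iff.2 ((prob_compl_eq_zero_iff (hX (Finset.measurableSet _))).2 hfull)

theorem condExp_mul_eq_mul_integral_of_indep {m m₀ mg : MeasurableSpace Ω}
    {μ : Measure[m₀] Ω} [IsFiniteMeasure μ] {f g : Ω → ℝ} (hm : m ≤ m₀) (hmg : mg ≤ m₀)
    (hf : Measurable[m] f) (hg : Measurable[mg] g) (hfi : Integrable f μ) (hgi : Integrable g μ)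
    (hind : Indep mg m μ) :
    μ[f * g|m] =ᵐ[μ] fun ω => f ω * ∫ x, g x ∂μ := by
  have hfg : Integrable (f * g) μ :=
    (hind.symm.indepFun_of_measurable hf hg).integrable_mul hfi hgi
  filter_upwards [condExp_mul_of_stronglyMeasurable_left hf.stronglyMeasurable hfg hgi,
    condExp_indep_eq hmg hm hg.stronglyMeasurable hind] with ω h₁ h₂
  rw [h₁, Pi.mul_apply, h₂]

end Probability

section Martingale

variable {Ω : Type*} {L R : ℕ → Ω → ℝ} {I : ℕ → Ω → ℕ}

/-- The factor by which splitting the `k`-th weight at step `n` changes `M^{(s)}`, relative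
to `β_{k,n}^s`; it vanishes unless `I_n = k`. -/
noncomputable def kacGain (L R : ℕ → Ω → ℝ) (I : ℕ → Ω → ℕ) (s : ℝ) (n k : ℕ) : Ω → ℝ :=
  (fun ω => L n ω ^ s + R n ω ^ s - 1) * {ω | I n ω = k}.indicator 1

theorem measurable_kacGain (s : ℝ) (n k : ℕ) :
    Measurable[MeasurableSpace.comap (kacFamily L R I (.inl n)) inferInstance
      ⊔ MeasurableSpace.comap (kacFamily L R I (.inr n)) inferInstance] (kacGain L R I s n k) :=
  ((((measurable_L_comap_kacFamily n).pow_const s).add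
      ((measurable_R_comap_kacFamily n).pow_const s)).sub_const 1 |>.mono le_sup_left le_rfl).mul
    (measurable_const.indicator
      ((measurable_I_comap_kacFamily n).mono le_sup_right le_rfl (measurableSet_singleton k)))

variable [MeasurableSpace Ω] {μ : Measure Ω}

theorem integrable_kacGain_and_integral_eq [IsProbabilityMeasure μ] {s : ℝ} {n k : ℕ}
    (hL : ∀ n, Measurable (L n)) (hR : ∀ n, Measurable (R n)) (hI : Measurable (I n))
    (hiid : μ.map (fun ω => (L n ω, R n ω)) = μ.map (fun ω => (L 1 ω, R 1 ω)))
    (hunif : ∀ k ∈ Icc 1 n, μ {ω | I n ω = k} = (n : ENNReal)⁻¹)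
    (hindep : iIndepFun (kacFamily L R I) μ)
    (hint : Integrable (fun ω => L 1 ω ^ s + R 1 ω ^ s) μ) (hk : k ∈ Icc 1 n) :
    Integrable (kacGain L R I s n k) μ ∧
      ∫ ω, kacGain L R I s n k ω ∂μ = ((∫ ω, (L 1 ω ^ s + R 1 ω ^ s) ∂μ) - 1) / n := by
  have hφ : Measurable fun p : ℝ × ℝ => p.1 ^ s + p.2 ^ s :=
    (measurable_fst.pow_const s).add (measurable_snd.pow_const s)
  have hdist : IdentDistrib (fun ω => L n ω ^ s + R n ω ^ s) (fun ω => L 1 ω ^ s + R 1 ω ^ s)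
      μ μ :=
    IdentDistrib.comp ⟨((hL n).prodMk (hR n)).aemeasurable,
      ((hL 1).prodMk (hR 1)).aemeasurable, hiid⟩ hφ
  have hXi : Integrable (fun ω => L n ω ^ s + R n ω ^ s - 1) μ :=
    (hdist.integrable_iff.2 hint).sub (integrable_const 1)
  have hAm : MeasurableSet {ω | I n ω = k} := hI (measurableSet_singleton k)
  have hind : IndepFun (fun ω => L n ω ^ s + R n ω ^ s - 1)
      ({ω | I n ω = k}.indicator (1 : Ω → ℝ)) μ := by
    refine ((IndepFun_iff_Indep _ _ _).1 (hindep.indepFun (i := .inl n) (j := .inr n)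
      (by simp))).indepFun_of_measurable ?_ ?_
    · exact (((measurable_L_comap_kacFamily n).pow_const s).add
        ((measurable_R_comap_kacFamily n).pow_const s)).sub_const 1
    · exact measurable_const.indicator
        (measurable_I_comap_kacFamily n (measurableSet_singleton k))
  refine ⟨hind.integrable_mul hXi ((integrable_const 1).indicator hAm), ?_⟩
  rw [kacGain, hind.integral_mul_eq_mul_integral hXi.aestronglyMeasurable
    ((integrable_const 1).indicator hAm).aestronglyMeasurable,
    integral_sub (hdist.integrable_iff.2 hint) (integrable_const 1),
    hdist.integral_eq, integral_indicator_one hAm, measureReal_def, hunif k hk]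
  simp [div_eq_mul_inv]

theorem kacM_add_one_ae [IsProbabilityMeasure μ] (hL : ∀ n ω, 0 ≤ L n ω)
    (hR : ∀ n ω, 0 ≤ R n ω) (s : ℝ) {n : ℕ} (hn : 1 ≤ n) (hI : Measurable (I n))
    (hunif : ∀ k ∈ Icc 1 n, μ {ω | I n ω = k} = (n : ENNReal)⁻¹) :
    kacM L R I s (n + 1) =ᵐ[μ] kacM L R I s n
      + ∑ k ∈ Icc 1 n, (fun ω => kacWeight L R I n k ω ^ s) * kacGain L R I s n k := by
  filter_upwards [ae_mem_Icc_of_measure_eq_inv hI hn hunif] with ω hω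
  rw [kacM_add_one hL hR s hn hω]
  simp [kacGain, Set.indicator_apply, hω, mul_comm]

theorem integrable_kacWeight_rpow (hL : ∀ n ω, 0 ≤ L n ω) (hR : ∀ n ω, 0 ≤ R n ω) {s : ℝ}
    {n k : ℕ} (hmeas : kacSigma L R I n ≤ ‹MeasurableSpace Ω›)
    (hM : Integrable (kacM L R I s n) μ) (hk : k ∈ Icc 1 n) :
    Integrable (fun ω => kacWeight L R I n k ω ^ s) μ := by
  refine hM.mono' (((measurable_kacWeight n k).pow_const s).mono hmeas le_rfl).aestronglyMeasurable
    (ae_of_all _ fun ω => ?_)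
  have hnonneg : ∀ j, 0 ≤ kacWeight L R I n j ω ^ s :=
    fun j => Real.rpow_nonneg (kacWeight_nonneg hL hR n j ω) s
  rw [Real.norm_of_nonneg (hnonneg k)]
  exact single_le_sum (fun j _ => hnonneg j) hk

variable [IsProbabilityMeasure μ]

theorem integrable_kacWeight_rpow_mul_kacGain {s : ℝ} {n k : ℕ} (hLpos : ∀ n ω, 0 ≤ L n ω)
    (hRpos : ∀ n ω, 0 ≤ R n ω) (hL : ∀ n, Measurable (L n)) (hR : ∀ n, Measurable (R n))
    (hI : ∀ n, Measurable (I n))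
    (hiid : μ.map (fun ω => (L n ω, R n ω)) = μ.map (fun ω => (L 1 ω, R 1 ω)))
    (hunif : ∀ k ∈ Icc 1 n, μ {ω | I n ω = k} = (n : ENNReal)⁻¹)
    (hindep : iIndepFun (kacFamily L R I) μ)
    (hint : Integrable (fun ω => L 1 ω ^ s + R 1 ω ^ s) μ)
    (hM : Integrable (kacM L R I s n) μ) (hk : k ∈ Icc 1 n) :
    Integrable ((fun ω => kacWeight L R I n k ω ^ s) * kacGain L R I s n k) μ :=
  ((indep_kacFamily_kacSigma hL hR hI hindep n).symm.indepFun_of_measurable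
      ((measurable_kacWeight n k).pow_const s) (measurable_kacGain s n k)).integrable_mul
    (integrable_kacWeight_rpow hLpos hRpos (kacSigma_le hL hR hI n) hM hk)
    (integrable_kacGain_and_integral_eq hL hR (hI n) hiid hunif hindep hint hk).1

theorem integrable_kacM (hLpos : ∀ n ω, 0 ≤ L n ω)
    (hRpos : ∀ n ω, 0 ≤ R n ω) (hL : ∀ n, Measurable (L n)) (hR : ∀ n, Measurable (R n))
    (hI : ∀ n, Measurable (I n))
    (hiid : ∀ n, 1 ≤ n →
      μ.map (fun ω => (L n ω, R n ω)) = μ.map (fun ω => (L 1 ω, R 1 ω)))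
    (hunif : ∀ n, 1 ≤ n → ∀ k ∈ Icc 1 n, μ {ω | I n ω = k} = (n : ENNReal)⁻¹)
    (hindep : iIndepFun (kacFamily L R I) μ) {s : ℝ}
    (hint : Integrable (fun ω => L 1 ω ^ s + R 1 ω ^ s) μ) {n : ℕ} (hn : 1 ≤ n) :
    Integrable (kacM L R I s n) μ := by
  induction n, hn using Nat.le_induction with
  | base =>
    have hM₁ : kacM L R I s 1 = fun _ => 1 := funext fun _ => by simp [kacM, kacWeight]
    exact hM₁ ▸ integrable_const 1
  | succ n hn hM =>
    refine (hM.add (integrable_finsetSum' _ fun k hk => ?_)).congr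
      (kacM_add_one_ae hLpos hRpos s hn (hI n) (hunif n hn)).symm
    exact integrable_kacWeight_rpow_mul_kacGain hLpos hRpos hL hR hI (hiid n hn) (hunif n hn)
      hindep hint hM hk

theorem condExp_kacM_add_one (hLpos : ∀ n ω, 0 ≤ L n ω)
    (hRpos : ∀ n ω, 0 ≤ R n ω) (hL : ∀ n, Measurable (L n)) (hR : ∀ n, Measurable (R n))
    (hI : ∀ n, Measurable (I n))
    (hiid : ∀ n, 1 ≤ n →
      μ.map (fun ω => (L n ω, R n ω)) = μ.map (fun ω => (L 1 ω, R 1 ω)))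
    (hunif : ∀ n, 1 ≤ n → ∀ k ∈ Icc 1 n, μ {ω | I n ω = k} = (n : ENNReal)⁻¹)
    (hindep : iIndepFun (kacFamily L R I) μ) {s : ℝ}
    (hint : Integrable (fun ω => L 1 ω ^ s + R 1 ω ^ s) μ) {n : ℕ} (hn : 1 ≤ n) :
    μ[kacM L R I s (n + 1)|kacSigma L R I n] =ᵐ[μ]
      fun ω => kacM L R I s n ω * (1 + ((∫ ω, (L 1 ω ^ s + R 1 ω ^ s) ∂μ) - 1) / n) := by
  have hG := kacSigma_le hL hR hI n
  have hM := integrable_kacM hLpos hRpos hL hR hI hiid hunif hindep hint hn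
  have hterm := fun k (hk : k ∈ Icc 1 n) => integrable_kacWeight_rpow_mul_kacGain hLpos hRpos
    hL hR hI (hiid n hn) (hunif n hn) hindep hint hM hk
  have hgain := fun k (hk : k ∈ Icc 1 n) => integrable_kacGain_and_integral_eq hL hR (hI n)
    (hiid n hn) (hunif n hn) hindep hint hk
  have hpresent : MeasurableSpace.comap (kacFamily L R I (.inl n)) inferInstance
      ⊔ MeasurableSpace.comap (kacFamily L R I (.inr n)) inferInstance ≤ ‹_› :=
    sup_le (measurable_kacFamily hL hR hI _).comap_le (measurable_kacFamily hL hR hI _).comap_le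
  calc μ[kacM L R I s (n + 1)|kacSigma L R I n]
      =ᵐ[μ] μ[kacM L R I s n + ∑ k ∈ Icc 1 n,
          (fun ω => kacWeight L R I n k ω ^ s) * kacGain L R I s n k|kacSigma L R I n] :=
        condExp_congr_ae (kacM_add_one_ae hLpos hRpos s hn (hI n) (hunif n hn))
    _ =ᵐ[μ] μ[kacM L R I s n|kacSigma L R I n] + ∑ k ∈ Icc 1 n,
          μ[(fun ω => kacWeight L R I n k ω ^ s) * kacGain L R I s n k|kacSigma L R I n] :=
        (condExp_add hM (integrable_finsetSum' _ hterm) _).trans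
          (Filter.EventuallyEq.rfl.add (condExp_finsetSum hterm _))
    _ =ᵐ[μ] kacM L R I s n + ∑ k ∈ Icc 1 n,
          fun ω => kacWeight L R I n k ω ^ s * ∫ x, kacGain L R I s n k x ∂μ := by
        rw [condExp_of_stronglyMeasurable hG (measurable_kacM s n).stronglyMeasurable hM]
        refine Filter.EventuallyEq.rfl.add (eventuallyEq_sum fun k hk => ?_)
        exact condExp_mul_eq_mul_integral_of_indep hG hpresent
          ((measurable_kacWeight n k).pow_const s) (measurable_kacGain s n k)
          (integrable_kacWeight_rpow hLpos hRpos hG hM hk) (hgain k hk).1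
          (indep_kacFamily_kacSigma hL hR hI hindep n)
    _ = fun ω => kacM L R I s n ω * (1 + ((∫ ω, (L 1 ω ^ s + R 1 ω ^ s) ∂μ) - 1) / n) := by
        funext ω
        rw [Pi.add_apply, Finset.sum_apply, sum_congr rfl fun k hk => by rw [(hgain k hk).2],
          kacM, ← sum_mul]
        ring

end Martingale

theorem condexp_kacM_general {Ω : Type*} [MeasurableSpace Ω] (μ : Measure Ω)
    [IsProbabilityMeasure μ]
    (L R : ℕ → Ω → ℝ) (I : ℕ → Ω → ℕ)
    (hLmeas : ∀ n, Measurable (L n)) (hRmeas : ∀ n, Measurable (R n))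
    (hImeas : ∀ n, Measurable (I n))
    (hLpos : ∀ n ω, 0 ≤ L n ω) (hRpos : ∀ n ω, 0 ≤ R n ω)
    (hiid : ∀ n, 1 ≤ n →
      μ.map (fun ω => (L n ω, R n ω)) = μ.map (fun ω => (L 1 ω, R 1 ω)))
    (hunif : ∀ n, 1 ≤ n → ∀ k ∈ Finset.Icc 1 n, μ {ω | I n ω = k} = (n : ENNReal)⁻¹)
    (hindep : iIndepFun (kacFamily L R I) μ)
    (s : ℝ)
    (hint : Integrable (fun ω => L 1 ω ^ s + R 1 ω ^ s) μ)
    (S : ℝ) (hS : S = (∫ ω, (L 1 ω ^ s + R 1 ω ^ s) ∂μ) - 1)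
    (n : ℕ) (hn : 1 ≤ n) :
    (μ[kacM L R I s (n + 1)|kacSigma L R I n]
        =ᵐ[μ] fun ω => kacM L R I s n ω * (1 + S / n)) ∧
    (S = 0 → μ[kacM L R I s (n + 1)|kacSigma L R I n] =ᵐ[μ] kacM L R I s n) := by
  have h := condExp_kacM_add_one hLpos hRpos hLmeas hRmeas hImeas hiid hunif hindep hint hn
  rw [← hS] at h
  exact ⟨h, fun hS₀ => h.trans (.of_eq (funext fun ω => by simp [hS₀]))⟩

theorem condexp_kacM {Ω : Type*} [MeasurableSpace Ω] (μ : Measure Ω)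
    [IsProbabilityMeasure μ]
    (L R : ℕ → Ω → ℝ) (I : ℕ → Ω → ℕ)
    (hLmeas : ∀ n, Measurable (L n)) (hRmeas : ∀ n, Measurable (R n))
    (hImeas : ∀ n, Measurable (I n))
    (hLpos : ∀ n ω, 0 ≤ L n ω) (hRpos : ∀ n ω, 0 ≤ R n ω)
    (hiid : ∀ n, 1 ≤ n →
      μ.map (fun ω => (L n ω, R n ω)) = μ.map (fun ω => (L 1 ω, R 1 ω)))
    (hunif : ∀ n, 1 ≤ n → ∀ k ∈ Finset.Icc 1 n, μ {ω | I n ω = k} = (n : ENNReal)⁻¹)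
    (hindep : iIndepFun (kacFamily L R I) μ)
    (s : ℝ) (hs : 0 < s)
    (hint : Integrable (fun ω => L 1 ω ^ s + R 1 ω ^ s) μ)
    (S : ℝ) (hS : S = (∫ ω, (L 1 ω ^ s + R 1 ω ^ s) ∂μ) - 1)
    (n : ℕ) (hn : 1 ≤ n) :
    (μ[kacM L R I s (n + 1)|kacSigma L R I n]
        =ᵐ[μ] fun ω => kacM L R I s n ω * (1 + S / n)) ∧
    (S = 0 → μ[kacM L R I s (n + 1)|kacSigma L R I n] =ᵐ[μ] kacM L R I s n) :=
  condexp_kacM_general μ L R I hLmeas hRmeas hImeas hLpos hRpos hiid hunif hindep s hint S hS n hn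
end

section
/- Let F₀ be a distribution function satisfying x^α(1−F₀(x)) → c⁺ as x → +∞ for some α, c⁺ > 0. Let (b_{j,n}) with 1 ≤ j ≤ n be a triangular array of positive reals such that M_n := Σ_{j=1}^n b_{j,n}^α → m ∈ [0,∞) and max_j b_{j,n} → 0 as n → ∞. Then for each x > 0, Σ_{j=1}^n (1 − F₀(x / b_{j,n})) → c⁺ m x^{−α} as n → ∞. -/
/-!
Write `g y = y ^ α * (1 - F₀ y)`, so that `1 - F₀ (x / b) = x ^ (-α) * (b ^ α * g (x / b))`.
Since `max_j b_{j,n} → 0`, all the points `x / b_{j,n}` tend to `+∞` uniformly in `j`, where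
`g` is uniformly close to `c⁺`; hence the `b_{j,n} ^ α`-weighted sum of the values `g (x / b_{j,n})`
is `c⁺ M_n + o(M_n)`, and `M_n → m`.
-/

open Filter Topology Finset

theorem Filter.Tendsto.sum_mul_comp {ι β X : Type*} {L : Filter ι} {l : Filter X} {g : X → ℝ}
    {c m : ℝ} (hg : Tendsto g l (𝓝 c)) {s : ι → Finset β} {w : ι → β → ℝ} {y : ι → β → X}
    (hw : ∀ n, ∀ j ∈ s n, 0 ≤ w n j) (hwm : Tendsto (fun n => ∑ j ∈ s n, w n j) L (𝓝 m))
    (hy : ∀ t ∈ l, ∀ᶠ n in L, ∀ j ∈ s n, y n j ∈ t) :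
    Tendsto (fun n => ∑ j ∈ s n, w n j * g (y n j)) L (𝓝 (m * c)) := by
  have hdev : Tendsto (fun n => ∑ j ∈ s n, w n j * (g (y n j) - c)) L (𝓝 0) := by
    rw [Metric.tendsto_nhds]
    intro ε hε
    have hclose := hy _ (Metric.tendsto_nhds.mp hg (ε / (|m| + 1)) (by positivity))
    have hbdd := hwm.eventually (gt_mem_nhds (lt_of_le_of_lt (le_abs_self m) (lt_add_one _)))
    filter_upwards [hclose, hbdd] with n hclose hbdd
    rw [Real.dist_0_eq_abs]
    calc |∑ j ∈ s n, w n j * (g (y n j) - c)|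
        ≤ ∑ j ∈ s n, w n j * |g (y n j) - c| := by
          refine (abs_sum_le_sum_abs _ _).trans_eq (sum_congr rfl fun j hj => ?_)
          rw [abs_mul, abs_of_nonneg (hw n j hj)]
      _ ≤ ∑ j ∈ s n, w n j * (ε / (|m| + 1)) :=
          sum_le_sum fun j hj => mul_le_mul_of_nonneg_left (hclose j hj).le (hw n j hj)
      _ = (∑ j ∈ s n, w n j) * (ε / (|m| + 1)) := (sum_mul ..).symm
      _ < (|m| + 1) * (ε / (|m| + 1)) := mul_lt_mul_of_pos_right hbdd (by positivity)
      _ = ε := by field_simp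
  convert hdev.add (hwm.mul_const c) using 2 with n
  · simp only [mul_sub, sum_sub_distrib, sum_mul, sub_add_cancel]
  · rw [zero_add]

theorem eventually_forall_div_mem_atTop {ι β : Type*} {L : Filter ι} {s : ι → Finset β}
    {b : ι → β → ℝ} (hb : ∀ n, ∀ j ∈ s n, 0 < b n j)
    (hmax : ∀ ε : ℝ, 0 < ε → ∀ᶠ n in L, ∀ j ∈ s n, b n j < ε) {x : ℝ} (hx : 0 < x) :
    ∀ t ∈ (atTop : Filter ℝ), ∀ᶠ n in L, ∀ j ∈ s n, x / b n j ∈ t := by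
  intro t ht
  obtain ⟨A, hA⟩ := mem_atTop_sets.mp ht
  have hA₁ : 0 < max A 1 := lt_max_of_lt_right one_pos
  filter_upwards [hmax (x / max A 1) (by positivity)] with n hsmall j hj
  have hbj := hb n j hj
  have hsmall := (lt_div_iff₀ hA₁).1 (hsmall j hj)
  refine hA _ ((le_max_left A 1).trans ((le_div_iff₀ hbj).2 ?_))
  linarith [mul_comm (b n j) (max A 1)]

theorem sum_of_scaled_tails_tendsto_general
    (F₀ : ℝ → ℝ) (α cplus : ℝ)
    (htail : Tendsto (fun x : ℝ => x ^ α * (1 - F₀ x)) atTop (nhds cplus))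
    (b : ℕ → ℕ → ℝ) (hb : ∀ n, ∀ j ∈ Finset.Icc 1 n, 0 < b n j)
    (m : ℝ)
    (hM : Tendsto (fun n => ∑ j ∈ Finset.Icc 1 n, b n j ^ α) atTop (nhds m))
    (hmax : ∀ ε : ℝ, 0 < ε → ∀ᶠ n in atTop, ∀ j ∈ Finset.Icc 1 n, b n j < ε) :
    ∀ x : ℝ, 0 < x →
      Tendsto (fun n => ∑ j ∈ Finset.Icc 1 n, (1 - F₀ (x / b n j)))
        atTop (nhds (cplus * m * x ^ (-α))) := by
  intro x hx
  have hterm : ∀ n, ∀ j ∈ Icc 1 n, x ^ (-α) * (b n j ^ α * ((x / b n j) ^ α *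
      (1 - F₀ (x / b n j)))) = 1 - F₀ (x / b n j) := by
    intro n j hj
    have hbj := hb n j hj
    rw [Real.div_rpow hx.le hbj.le, Real.rpow_neg hx.le]
    field_simp
  have hsum := htail.sum_mul_comp (fun n j hj => Real.rpow_nonneg (hb n j hj).le α) hM
    (eventually_forall_div_mem_atTop hb hmax hx)
  rw [show cplus * m * x ^ (-α) = x ^ (-α) * (m * cplus) by ring]
  refine (hsum.const_mul _).congr fun n => ?_
  rw [mul_sum]
  exact sum_congr rfl (hterm n)

theorem sum_of_scaled_tails_tendsto
    (F₀ : ℝ → ℝ) (α cplus : ℝ) (hα : 0 < α) (hc : 0 < cplus)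
    (htail : Tendsto (fun x : ℝ => x ^ α * (1 - F₀ x)) atTop (nhds cplus))
    (b : ℕ → ℕ → ℝ) (hb : ∀ n, ∀ j ∈ Finset.Icc 1 n, 0 < b n j)
    (m : ℝ) (hm : 0 ≤ m)
    (hM : Tendsto (fun n => ∑ j ∈ Finset.Icc 1 n, b n j ^ α) atTop (nhds m))
    (hmax : ∀ ε : ℝ, 0 < ε → ∀ᶠ n in atTop, ∀ j ∈ Finset.Icc 1 n, b n j < ε) :
    ∀ x : ℝ, 0 < x →
      Tendsto (fun n => ∑ j ∈ Finset.Icc 1 n, (1 - F₀ (x / b n j)))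
        atTop (nhds (cplus * m * x ^ (-α))) :=
  sum_of_scaled_tails_tendsto_general F₀ α cplus htail b hb m hM hmax
end
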